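/- arXiv:2409.01923 — 5 statements merged into one kernel-verified Lean document; each statement's English description precedes it below -/
import Mathlib

section
/- Let k, n, s, t be real numbers with s ≥ 0, t ≥ 0, s + t = k - 6, s ≤ t + 2, k ≥ 15, n ≥ k + 20, and u = n - k + 1. Then for every real λ with n - 4 ≤ λ ≤ n - 1, p(λ) < 0, where p(λ) = (s-t-2)λ^4 + 4(s-t-2)λ^3 - 2[(u+1)(s-t-2)+4]λ² - 4[(u+3)(s-t-2)+4]λ + 14su - 7s - 14tu + 7t - 12u + 6. -/
/-- The quartic `p(λ)`. -/
def p (s t u lam : ℝ) : ℝ :=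
  (s - t - 2) * lam ^ 4 + 4 * (s - t - 2) * lam ^ 3
    - 2 * ((u + 1) * (s - t - 2) + 4) * lam ^ 2
    - 4 * ((u + 3) * (s - t - 2) + 4) * lam
    + 14 * s * u - 7 * s - 14 * t * u + 7 * t - 12 * u + 6

theorem p_neg (k n s t u : ℝ) (hs : 0 ≤ s) (ht : 0 ≤ t) (hst : s + t = k - 6)
    (hs2 : s ≤ t + 2) (hk : 15 ≤ k) (hn : k + 20 ≤ n) (hu : u = n - k + 1) :
    ∀ lam : ℝ, n - 4 ≤ lam → lam ≤ n - 1 → p s t u lam < 0 := by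
  intro lam h1 h2
  have hc : s - t - 2 ≤ 0 := by linarith
  have hlam : 31 ≤ lam := by linarith
  have hul : u + 9 ≤ lam := by linarith
  have hQ : 0 ≤ lam ^ 4 + 4 * lam ^ 3 - 2 * (u + 1) * lam ^ 2
      - 4 * (u + 3) * lam + 14 * u - 7 := by
    have hu0 : 0 ≤ u := by linarith
    nlinarith [sq_nonneg lam, sq_nonneg (lam - u), mul_pos (by linarith : (0:ℝ) < lam) (by linarith : (0:ℝ) < lam), pow_pos (by linarith : (0:ℝ) < lam) 3, mul_nonneg (mul_nonneg (by linarith : (0:ℝ) ≤ lam) (by linarith : (0:ℝ) ≤ lam)) (by linarith : (0:ℝ) ≤ lam - u - 9)]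
  have hR : - 8 * lam ^ 2 - 16 * lam + 16 * u - 8 < 0 := by
    nlinarith [sq_nonneg (lam + 1)]
  have hcQ : (s - t - 2) * (lam ^ 4 + 4 * lam ^ 3 - 2 * (u + 1) * lam ^ 2
      - 4 * (u + 3) * lam + 14 * u - 7) ≤ 0 := mul_nonpos_of_nonpos_of_nonneg hc hQ
  have : p s t u lam = (s - t - 2) * (lam ^ 4 + 4 * lam ^ 3 - 2 * (u + 1) * lam ^ 2
      - 4 * (u + 3) * lam + 14 * u - 7) + (- 8 * lam ^ 2 - 16 * lam + 16 * u - 8) := by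
    unfold p; ring
  linarith [hcQ, hR, this.le]
end

section
/- Let k, n, s, t be real numbers with t ≥ 0, s + t = k - 6, s ≥ t + 3, k ≥ 15, n ≥ k + 20, and u = n - k + 1. Then for every real λ with n - 4 ≤ λ ≤ n - 1, p(λ) > 0, where p(λ) = (s-t-2)λ^4 + 4(s-t-2)λ^3 - 2[(u+1)(s-t-2)+4]λ² - 4[(u+3)(s-t-2)+4]λ + 14su - 7s - 14tu + 7t - 12u + 6. -/
theorem p_pos (k n s t u : ℝ) (ht : 0 ≤ t) (hst : s + t = k - 6)
    (hs2 : t + 3 ≤ s) (hk : 15 ≤ k) (hn : k + 20 ≤ n) (hu : u = n - k + 1) :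
    ∀ lam : ℝ, n - 4 ≤ lam → lam ≤ n - 1 → 0 < p s t u lam := by
  intro lam h1 h2
  have hu21 : (21:ℝ) ≤ u := by linarith
  have hlam : u + 10 ≤ lam := by linarith
  have hd : (1:ℝ) ≤ s - t - 2 := by linarith
  have hlam0 : (0:ℝ) < lam := by linarith
  set q : ℝ := lam ^ 4 + 4 * lam ^ 3 - 2 * (u + 1) * lam ^ 2 - 4 * (u + 3) * lam + 14 * u - 7 with hqdef
  have h3 : (0:ℝ) ≤ lam ^ 2 - 2 * u - 10 := by nlinarith
  have hq : 8 * lam ^ 2 + 16 * lam + 12 * u ≤ q := by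
    nlinarith [mul_nonneg (sq_nonneg lam) h3, mul_pos hlam0 (by nlinarith : (0:ℝ) < lam ^ 2 - u - 7)]
  have hq0 : (0:ℝ) ≤ q := by nlinarith
  have hp : p s t u lam = (s - t - 2) * q - 8 * lam ^ 2 - 16 * lam + 16 * u - 8 := by
    simp only [hqdef, p]; ring
  rw [hp]
  nlinarith [mul_nonneg (by linarith : (0:ℝ) ≤ s - t - 3) hq0]
end

section
/- Let A be a real symmetric n×n matrix, let x be a unit eigenvector of A corresponding to its largest eigenvalue λ₁(A), and let r, s, t be distinct indices with A_{rt} = 1 and A_{rs} = -1. Let A' be obtained from A by setting A'_{rt} = A'_{tr} = -1 and A'_{rs} = A'_{sr} = 1, all other entries unchanged. If x_r ≥ 0 and x_s ≥ x_t (or x_r ≤ 0 and x_s ≤ x_t), then λ₁(A') ≥ λ₁(A); moreover if x_r > 0 and x_s > x_t (or x_r < 0 and x_s < x_t), then λ₁(A') > λ₁(A). -/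
/-- The matrix obtained from `A` by reversing the signs of the entries at
positions `(r,t), (t,r)` (set to `-1`) and `(r,s), (s,r)` (set to `1`). -/
def reverse (n : ℕ) (A : Matrix (Fin n) (Fin n) ℝ) (r s t : Fin n) :
    Matrix (Fin n) (Fin n) ℝ :=
  Matrix.of fun i j =>
    if (i = r ∧ j = t) ∨ (i = t ∧ j = r) then -1
    else if (i = r ∧ j = s) ∨ (i = s ∧ j = r) then 1
    else A i j


open Matrix

lemma star_transpose_real {n : ℕ} (U : Matrix (Fin n) (Fin n) ℝ) : star U = Uᵀ := by
  rw [Matrix.star_eq_conjTranspose, Matrix.conjTranspose_eq_transpose_of_trivial]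

lemma rayleigh_le {n : ℕ} [Nonempty (Fin n)] (B : Matrix (Fin n) (Fin n) ℝ)
    (hB : B.IsHermitian) (y : Fin n → ℝ) (hy : ∑ i, y i ^ 2 = 1) :
    y ⬝ᵥ B *ᵥ y ≤ ⨆ i, hB.eigenvalues i := by
  set U : Matrix (Fin n) (Fin n) ℝ := (hB.eigenvectorUnitary : Matrix (Fin n) (Fin n) ℝ) with hU
  have hUstar : U * star U = 1 := (Matrix.mem_unitaryGroup_iff).mp hB.eigenvectorUnitary.2
  set c : Fin n → ℝ := star U *ᵥ y with hc
  have hyy : y ⬝ᵥ y = 1 := by simpa [dotProduct, sq] using hy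
  have hnorm : ∑ k, c k ^ 2 = 1 := by
    have h : c ⬝ᵥ c = 1 := by
      rw [hc, dotProduct_mulVec, star_transpose_real, vecMul_transpose,
        Matrix.mulVec_mulVec, ← star_transpose_real, hUstar, Matrix.one_mulVec, hyy]
    simpa [dotProduct, sq] using h
  have key : y ⬝ᵥ B *ᵥ y = ∑ k, hB.eigenvalues k * c k ^ 2 := by
    conv_lhs => rw [hB.spectral_theorem, Unitary.conjStarAlgAut_apply]
    rw [← Matrix.mulVec_mulVec, ← Matrix.mulVec_mulVec, dotProduct_mulVec,
      ← vecMul_transpose, ← star_transpose_real, ← hU, ← hc]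
    have h1 : y ᵥ* U = c := by
      rw [hc, star_transpose_real, ← Matrix.vecMul_transpose, Matrix.transpose_transpose]
    rw [h1, star_transpose_real, Matrix.diagonal_transpose]
    simp [Matrix.vecMul_diagonal, dotProduct, sq]
    exact Finset.sum_congr rfl fun k _ => by ring
  rw [key]
  calc ∑ k, hB.eigenvalues k * c k ^ 2 ≤ ∑ k, (⨆ i, hB.eigenvalues i) * c k ^ 2 := by
        apply Finset.sum_le_sum
        intro k _
        exact mul_le_mul_of_nonneg_right (le_ciSup (Set.Finite.bddAbove (Set.finite_range _)) k) (sq_nonneg _)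
    _ = ⨆ i, hB.eigenvalues i := by rw [← Finset.mul_sum, hnorm, mul_one]

theorem perturbation_lemma (n : ℕ) (A : Matrix (Fin n) (Fin n) ℝ)
    (hA : A.IsHermitian) (x : Fin n → ℝ) (hunit : ∑ i, x i ^ 2 = 1)
    (heig : A.mulVec x = (⨆ i, hA.eigenvalues i) • x)
    (r s t : Fin n) (hrs : r ≠ s) (hrt : r ≠ t) (hst : s ≠ t)
    (hArt : A r t = 1) (hArs : A r s = -1)
    (hA' : (reverse n A r s t).IsHermitian) :
    ((0 ≤ x r ∧ x t ≤ x s) ∨ (x r ≤ 0 ∧ x s ≤ x t) →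
      (⨆ i, hA.eigenvalues i) ≤ ⨆ i, hA'.eigenvalues i) ∧
    ((0 < x r ∧ x t < x s) ∨ (x r < 0 ∧ x s < x t) →
      (⨆ i, hA.eigenvalues i) < ⨆ i, hA'.eigenvalues i) := by
  haveI : Nonempty (Fin n) := ⟨r⟩
  have hAtr : A t r = 1 := by
    have := congrFun (congrFun hA.symm t) r
    simp [Matrix.conjTranspose_apply] at this
    rw [this, hArt]
  have hAsr : A s r = -1 := by
    have := congrFun (congrFun hA.symm s) r
    simp [Matrix.conjTranspose_apply] at this
    rw [this, hArs]
  have hdecomp : reverse n A r s t = A +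
      ((-2 : ℝ) • (single r t 1 + single t r 1) +
        (2 : ℝ) • (single r s 1 + single s r 1)) := by
    ext i j
    by_cases h1 : (i = r ∧ j = t) ∨ (i = t ∧ j = r)
    · rcases h1 with ⟨rfl, rfl⟩ | ⟨rfl, rfl⟩ <;>
        simp [reverse, Matrix.single, hrs, hrt, hst, hrs.symm, hrt.symm, hst.symm,
          hArt, hAtr, hArs, hAsr] <;> ring
    · by_cases h2 : (i = r ∧ j = s) ∨ (i = s ∧ j = r)
      · rcases h2 with ⟨rfl, rfl⟩ | ⟨rfl, rfl⟩ <;>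
          simp [reverse, Matrix.single, hrs, hrt, hst, hrs.symm, hrt.symm, hst.symm,
            hArt, hAtr, hArs, hAsr] <;> ring
      · push_neg at h1 h2
        have e1 : ¬(r = i ∧ t = j) := fun h => h1.1 h.1.symm h.2.symm
        have e2 : ¬(t = i ∧ r = j) := fun h => h1.2 h.1.symm h.2.symm
        have e3 : ¬(r = i ∧ s = j) := fun h => h2.1 h.1.symm h.2.symm
        have e4 : ¬(s = i ∧ r = j) := fun h => h2.2 h.1.symm h.2.symm
        have f1 : ¬(i = r ∧ j = t) := fun h => h1.1 h.1 h.2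
        have f2 : ¬(i = t ∧ j = r) := fun h => h1.2 h.1 h.2
        have f3 : ¬(i = r ∧ j = s) := fun h => h2.1 h.1 h.2
        have f4 : ¬(i = s ∧ j = r) := fun h => h2.2 h.1 h.2
        simp [reverse, Matrix.single, e1, e2, e3, e4, f1, f2, f3, f4]
  have hxx : x ⬝ᵥ x = 1 := by simpa [dotProduct, sq] using hunit
  have hAq : x ⬝ᵥ A *ᵥ x = ⨆ i, hA.eigenvalues i := by
    rw [heig]
    simp [dotProduct_smul, hxx]
  have hstd : ∀ a b : Fin n, x ⬝ᵥ (single a b (1:ℝ)) *ᵥ x = x a * x b := by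
    intro a b
    rw [single_mulVec]
    simp [dotProduct, Function.update, Finset.sum_ite_eq]
  have hA'q : x ⬝ᵥ (reverse n A r s t) *ᵥ x
      = (⨆ i, hA.eigenvalues i) + 4 * (x r * (x s - x t)) := by
    rw [hdecomp]
    simp only [Matrix.add_mulVec, Matrix.smul_mulVec, dotProduct_add, dotProduct_smul,
      smul_eq_mul, hstd, hAq]
    ring
  have hray := rayleigh_le (reverse n A r s t) hA' x hunit
  rw [hA'q] at hray
  constructor
  · rintro (⟨h1, h2⟩ | ⟨h1, h2⟩) <;> nlinarith
  · rintro (⟨h1, h2⟩ | ⟨h1, h2⟩) <;> nlinarith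
end

section
/- Let A be a real symmetric n×n matrix with zero diagonal and off-diagonal entries in {1, -1}, and let S be a proper subset of the indices such that A_{ij} = 1 whenever i ∉ S or j ∉ S (i ≠ j), i.e., all entries equal to -1 lie inside S×S. Suppose x is a nonzero eigenvector of A with eigenvalue λ such that x_i = 0 for all i ∈ S. Then λ ≤ n - 1 - |S|. -/
theorem aux_eigenvalue_le (n : ℕ)
    (A : Matrix (Fin n) (Fin n) ℝ)
    (hdiag : ∀ i, A i i = 0)
    (S : Finset (Fin n)) (hS : S ≠ Finset.univ)
    (hneg : ∀ i j, i ≠ j → (i ∉ S ∨ j ∉ S) → A i j = 1)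
    (x : Fin n → ℝ) (lam : ℝ)
    (heig : A.mulVec x = lam • x) (hvanish : ∀ i ∈ S, x i = 0)
    (m : Fin n) (hm : m ∉ S) (hpos : 0 < x m)
    (hmax : ∀ j, j ∉ S → x j ≤ x m) :
    lam ≤ (n : ℝ) - 1 - S.card := by
  have h1 : lam * x m = ∑ j ∈ Sᶜ \ {m}, x j := by
    have h := congrFun heig m
    simp only [Matrix.mulVec, dotProduct, Pi.smul_apply, smul_eq_mul] at h
    rw [← h]
    rw [← Finset.sum_subset (Finset.subset_univ (Sᶜ \ {m}))]
    · apply Finset.sum_congr rfl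
      intro j hj
      simp only [Finset.mem_sdiff, Finset.mem_compl, Finset.mem_singleton] at hj
      rw [hneg m j (fun h' => hj.2 h'.symm) (Or.inl hm), one_mul]
    · intro j _ hj
      simp only [Finset.mem_sdiff, Finset.mem_compl, Finset.mem_singleton, not_and,
        not_not] at hj
      by_cases hjS : j ∈ S
      · simp [hvanish j hjS]
      · have hjm : j = m := hj hjS
        subst hjm; simp [hdiag]
  have hcardS : S.card < n := by
    have := Finset.card_lt_card (lt_of_le_of_ne (Finset.subset_univ S)
      (by simpa using hS))
    simpa using this
  have hmem : m ∈ Sᶜ := Finset.mem_compl.mpr hm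
  have hcard : ((Sᶜ \ {m}).card : ℝ) = (n : ℝ) - 1 - S.card := by
    rw [Finset.sdiff_singleton_eq_erase, Finset.card_erase_of_mem hmem,
      Finset.card_compl]
    simp only [Fintype.card_fin]
    have h1 : 1 ≤ n - S.card := by omega
    push_cast [Nat.cast_sub (le_of_lt hcardS), Nat.cast_sub h1]
    ring
  have h2 : ∑ j ∈ Sᶜ \ {m}, x j ≤ (Sᶜ \ {m}).card • x m := by
    apply Finset.sum_le_card_nsmul
    intro j hj
    simp only [Finset.mem_sdiff, Finset.mem_compl] at hj
    exact hmax j hj.1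
  rw [nsmul_eq_mul, hcard] at h2
  have := h1.le.trans h2
  exact le_of_mul_le_mul_right this hpos

theorem eigenvalue_le_of_eigenvector_vanishing (n : ℕ)
    (A : Matrix (Fin n) (Fin n) ℝ) (hA : A.IsSymm)
    (hdiag : ∀ i, A i i = 0)
    (hoff : ∀ i j, i ≠ j → A i j = 1 ∨ A i j = -1)
    (S : Finset (Fin n)) (hS : S ≠ Finset.univ)
    (hneg : ∀ i j, i ≠ j → (i ∉ S ∨ j ∉ S) → A i j = 1)
    (x : Fin n → ℝ) (hx : x ≠ 0) (lam : ℝ)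
    (heig : A.mulVec x = lam • x) (hvanish : ∀ i ∈ S, x i = 0) :
    lam ≤ (n : ℝ) - 1 - S.card := by
  obtain ⟨i, hi⟩ : ∃ i, x i ≠ 0 := by
    by_contra h
    push_neg at h
    exact hx (funext h)
  have hiS : i ∉ S := fun h => hi (hvanish i h)
  have hne : (Sᶜ : Finset (Fin n)).Nonempty := ⟨i, Finset.mem_compl.mpr hiS⟩
  obtain ⟨m, hmmem, hmmax⟩ := Finset.exists_max_image Sᶜ x hne
  by_cases hpos : 0 < x m
  · exact aux_eigenvalue_le n A hdiag S hS hneg x lam heig hvanish m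
      (Finset.mem_compl.mp hmmem) hpos
      (fun j hj => hmmax j (Finset.mem_compl.mpr hj))
  · -- apply to -x
    obtain ⟨m', hm'mem, hm'min⟩ := Finset.exists_min_image Sᶜ x hne
    have hxm' : x m' < 0 := by
      have h1 := hm'min i (Finset.mem_compl.mpr hiS)
      have h2 := hmmax i (Finset.mem_compl.mpr hiS)
      push_neg at hpos
      rcases lt_trichotomy (x i) 0 with h | h | h
      · exact lt_of_le_of_lt h1 h
      · exact absurd h hi
      · linarith
    have heig' : A.mulVec (-x) = lam • (-x) := by
      rw [Matrix.mulVec_neg, heig]; module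
    have := aux_eigenvalue_le n A hdiag S hS hneg (-x) lam heig'
      (fun j hj => by simp [hvanish j hj]) m' (Finset.mem_compl.mp hm'mem)
      (by simpa using hxm')
      (fun j hj => by
        simpa using hm'min j (Finset.mem_compl.mpr hj))
    exact this
end

section
/- Let A be a real symmetric n×n matrix, and let x be a unit eigenvector for the largest eigenvalue λ₁(A). Let r, s, t be distinct indices with A_{rt} = 1, A_{rs} = -1, and let A' be A with entries (r,t),(t,r) changed to -1 and (r,s),(s,r) changed to +1. If x_r(x_s - x_t) ≥ 0, then λ₁(A') ≥ λ₁(A). -/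
open Matrix

theorem perturbation_lemma_weak (n : ℕ) (A : Matrix (Fin n) (Fin n) ℝ)
    (hA : A.IsHermitian) (x : Fin n → ℝ) (hunit : ∑ i, x i ^ 2 = 1)
    (heig : A.mulVec x = (⨆ i, hA.eigenvalues i) • x)
    (r s t : Fin n) (hrs : r ≠ s) (hrt : r ≠ t) (hst : s ≠ t)
    (hArt : A r t = 1) (hArs : A r s = -1)
    (hA' : (reverse n A r s t).IsHermitian)
    (hsign : 0 ≤ x r * (x s - x t)) :
    (⨆ i, hA.eigenvalues i) ≤ ⨆ i, hA'.eigenvalues i := by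
  classical
  have hsym : ∀ i j, A i j = A j i := by
    intro i j
    have := congrFun (congrFun hA i) j
    simpa [Matrix.conjTranspose_apply] using this.symm
  set lam := ⨆ i, hA.eigenvalues i with hlam
  -- Step 1: Rayleigh quotient of x w.r.t. A is lam
  have h1 : x ⬝ᵥ (A *ᵥ x) = lam := by
    rw [heig]
    have : x ⬝ᵥ (lam • x) = lam * ∑ i, x i ^ 2 := by
      simp only [dotProduct, Pi.smul_apply, smul_eq_mul, Finset.mul_sum]
      exact Finset.sum_congr rfl fun i _ => by ring
    rw [this, hunit, mul_one]
  -- expansion of a quadratic form as a double sum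
  have expand : ∀ M : Matrix (Fin n) (Fin n) ℝ,
      x ⬝ᵥ (M *ᵥ x) = ∑ p ∈ Finset.univ ×ˢ Finset.univ, x p.1 * M p.1 p.2 * x p.2 := by
    intro M
    rw [Finset.sum_product]
    simp only [dotProduct, Matrix.mulVec, Finset.mul_sum]
    exact Finset.sum_congr rfl fun i _ => Finset.sum_congr rfl fun j _ => by ring
  -- Step 2: the quadratic form w.r.t. the reversed matrix
  have h2 : x ⬝ᵥ ((reverse n A r s t) *ᵥ x)
      = x ⬝ᵥ (A *ᵥ x) + 4 * (x r * (x s - x t)) := by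
    have hdiff : x ⬝ᵥ ((reverse n A r s t) *ᵥ x) - x ⬝ᵥ (A *ᵥ x)
        = ∑ p ∈ Finset.univ ×ˢ Finset.univ,
            x p.1 * ((reverse n A r s t) p.1 p.2 - A p.1 p.2) * x p.2 := by
      rw [expand, expand, ← Finset.sum_sub_distrib]
      exact Finset.sum_congr rfl fun p _ => by ring
    have hsub : ∑ p ∈ Finset.univ ×ˢ Finset.univ,
        x p.1 * ((reverse n A r s t) p.1 p.2 - A p.1 p.2) * x p.2
        = ∑ p ∈ ({(r,t),(t,r),(r,s),(s,r)} : Finset (Fin n × Fin n)),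
            x p.1 * ((reverse n A r s t) p.1 p.2 - A p.1 p.2) * x p.2 := by
      refine (Finset.sum_subset (Finset.subset_univ _) ?_).symm
      intro p _ hp
      simp only [Finset.mem_insert, Finset.mem_singleton, not_or] at hp
      obtain ⟨h1', h2', h3', h4'⟩ := hp
      have hrev : (reverse n A r s t) p.1 p.2 = A p.1 p.2 := by
        have e1 : ¬(p.1 = r ∧ p.2 = t) := fun h => h1' (Prod.ext h.1 h.2)
        have e2 : ¬(p.1 = t ∧ p.2 = r) := fun h => h2' (Prod.ext h.1 h.2)
        have e3 : ¬(p.1 = r ∧ p.2 = s) := fun h => h3' (Prod.ext h.1 h.2)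
        have e4 : ¬(p.1 = s ∧ p.2 = r) := fun h => h4' (Prod.ext h.1 h.2)
        simp [reverse, e1, e2, e3, e4]
      rw [hrev]
      ring
    have hAtr : A t r = 1 := by rw [← hsym]; exact hArt
    have hAsr : A s r = -1 := by rw [← hsym]; exact hArs
    have hval : ∑ p ∈ ({(r,t),(t,r),(r,s),(s,r)} : Finset (Fin n × Fin n)),
        x p.1 * ((reverse n A r s t) p.1 p.2 - A p.1 p.2) * x p.2
        = 4 * (x r * (x s - x t)) := by
      have m1 : ((r,t) : Fin n × Fin n) ∉ ({(t,r),(r,s),(s,r)} : Finset (Fin n × Fin n)) := by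
        simp [Prod.ext_iff, hrt, hst.symm, hrt.symm]
      have m2 : ((t,r) : Fin n × Fin n) ∉ ({(r,s),(s,r)} : Finset (Fin n × Fin n)) := by
        simp [Prod.ext_iff, hrt.symm, hst.symm]
      have m3 : ((r,s) : Fin n × Fin n) ∉ ({(s,r)} : Finset (Fin n × Fin n)) := by
        simp [Prod.ext_iff, hrs]
      rw [Finset.sum_insert m1, Finset.sum_insert m2, Finset.sum_insert m3,
        Finset.sum_singleton]
      have v1 : (reverse n A r s t) r t = -1 := by simp [reverse]
      have v2 : (reverse n A r s t) t r = -1 := by simp [reverse]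
      have v3 : (reverse n A r s t) r s = 1 := by simp [reverse, hst, hrt]
      have v4 : (reverse n A r s t) s r = 1 := by simp [reverse, hst, hrs.symm]
      rw [v1, v2, v3, v4, hArt, hArs, hAtr, hAsr]
      ring
    linarith [hdiff, hsub ▸ hdiff, hval]
  -- Spectral decomposition of the reversed matrix
  set μ : Fin n → ℝ := hA'.eigenvalues with hμ
  set v := hA'.eigenvectorBasis with hv
  set y : EuclideanSpace ℝ (Fin n) := WithLp.toLp 2 x with hy
  set c : Fin n → ℝ := fun i => inner ℝ (v i) y with hc
  have hinner : ∀ a b : EuclideanSpace ℝ (Fin n),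
      (inner ℝ a b : ℝ) = ∑ i, a i * b i := by
    intro a b
    simp [PiLp.inner_apply, RCLike.inner_apply, mul_comm]
  -- Parseval
  have hnorm : ∑ i, c i ^ 2 = 1 := by
    have := v.sum_inner_mul_inner y y
    have hyy : (inner ℝ y y : ℝ) = 1 := by
      rw [hinner]
      calc ∑ i, y i * y i = ∑ i, x i ^ 2 := Finset.sum_congr rfl fun i _ => by
            simp [hy, sq]
        _ = 1 := hunit
    rw [hyy] at this
    calc ∑ i, c i ^ 2 = ∑ i, (inner ℝ y (v i) : ℝ) * inner ℝ (v i) y := by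
          refine Finset.sum_congr rfl fun i _ => ?_
          rw [hc, sq, real_inner_comm]
      _ = 1 := this
  -- representation of x in the eigenbasis
  have hxrep : x = ∑ i, c i • ⇑(v i) := by
    have h2' : (∑ i, c i • v i : EuclideanSpace ℝ (Fin n)) = y := v.sum_repr' y
    have h3' := congrArg WithLp.ofLp h2'
    simpa [hy] using h3'.symm
  have hmul : (reverse n A r s t) *ᵥ x = ∑ i, (c i * μ i) • ⇑(v i) := by
    conv_lhs => rw [hxrep]
    calc (reverse n A r s t) *ᵥ (∑ i, c i • ⇑(v i))
        = (reverse n A r s t).mulVecLin (∑ i, c i • ⇑(v i)) := rfl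
      _ = ∑ i, (reverse n A r s t).mulVecLin (c i • ⇑(v i)) := map_sum _ _ _
      _ = ∑ i, (c i * μ i) • ⇑(v i) := by
          refine Finset.sum_congr rfl fun i _ => ?_
          rw [LinearMap.map_smul]
          have : (reverse n A r s t).mulVecLin ⇑(v i) = (reverse n A r s t) *ᵥ ⇑(v i) := rfl
          rw [this, hA'.mulVec_eigenvectorBasis i, smul_smul]
  have h3 : x ⬝ᵥ ((reverse n A r s t) *ᵥ x) = ∑ i, μ i * c i ^ 2 := by
    rw [hmul]
    simp only [dotProduct, Finset.sum_apply, Pi.smul_apply, smul_eq_mul,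
      Finset.mul_sum]
    rw [Finset.sum_comm]
    refine Finset.sum_congr rfl fun i _ => ?_
    have hxv : ∑ j, x j * (v i) j = c i := by
      have hi := hinner (v i) y
      rw [hc]
      simp only [hi]
      exact Finset.sum_congr rfl fun j _ => by rw [hy]; ring
    calc ∑ j, x j * ((c i * μ i) * (v i) j)
        = (c i * μ i) * ∑ j, x j * (v i) j := by
          rw [Finset.mul_sum]; exact Finset.sum_congr rfl fun j _ => by ring
      _ = μ i * c i ^ 2 := by rw [hxv]; ring
  -- final bound
  have hbdd : BddAbove (Set.range μ) := Set.Finite.bddAbove (Set.finite_range μ)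
  have h4 : ∑ i, μ i * c i ^ 2 ≤ ⨆ i, μ i := by
    calc ∑ i, μ i * c i ^ 2 ≤ ∑ i, (⨆ j, μ j) * c i ^ 2 :=
          Finset.sum_le_sum fun i _ =>
            mul_le_mul_of_nonneg_right (le_ciSup hbdd i) (sq_nonneg _)
      _ = ⨆ j, μ j := by rw [← Finset.mul_sum, hnorm, mul_one]
  linarith [h1, h2, h3, h4, hsign]
end
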